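/- arXiv:1206.0382 — 4 statements merged into one kernel-verified Lean document; each statement's English description precedes it below -/
import Mathlib

section
/- Assume T is disk-like. Let ℓ, ℓ' ∈ ℤ² \ {0} with T ∩ (T + ℓ) ≠ ∅ and T ∩ (T + ℓ') ≠ ∅, and suppose ℓ' = Aℓ − b_1 v for some b_1 ∈ ΔD. Then for every j ∈ I_{b_1}, one has A^{−1}(T_{ℓ'} + jv) ⊆ T_ℓ, where T_m = T ∩ (T + m) and I_{b_1} = {b_1, b_1+1, …, |q|−1} if b_1 ≥ 0 and I_{b_1} = {0, 1, …, |q|−1+b_1} if b_1 < 0. -/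
noncomputable section

open Matrix Topology Set Pointwise Polynomial

/-- The plane `ℝ²` with the Euclidean metric. -/
abbrev E2 : Type := EuclideanSpace ℝ (Fin 2)

/-- View a plain vector `Fin 2 → ℝ` as a point of the Euclidean plane. -/
def toE (x : Fin 2 → ℝ) : E2 := WithLp.toLp 2 x

/-- The real matrix obtained from an integer matrix. -/
def matR (A : Matrix (Fin 2) (Fin 2) ℤ) : Matrix (Fin 2) (Fin 2) ℝ := A.map Int.cast

/-- View an integer vector as a point of the Euclidean plane. -/
def vecE (w : Fin 2 → ℤ) : E2 := toE fun i => (w i : ℝ)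

/-- All complex eigenvalues of `A` have modulus greater than 1. -/
def Expanding (A : Matrix (Fin 2) (Fin 2) ℤ) : Prop :=
  ∀ z : ℂ, ((A.charpoly).map (Int.castRingHom ℂ)).IsRoot z → 1 < ‖z‖

/-- `a` is a digit in `D = {0, 1, …, |q|-1}`. -/
def IsDigit (q a : ℤ) : Prop := 0 ≤ a ∧ a < |q|

/-- `b` belongs to the difference digit set `ΔD = D - D = {-(|q|-1), …, |q|-1}`. -/
def IsDiffDigit (q b : ℤ) : Prop := |b| ≤ |q| - 1

/-- `x = ∑_{i≥1} A^{-i} (c_{i-1} v)` (note the `0`-based indexing of `c`). -/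
def SumsTo (A : Matrix (Fin 2) (Fin 2) ℤ) (v : Fin 2 → ℤ) (c : ℕ → ℤ) (x : E2) : Prop :=
  HasSum (fun i : ℕ => toE (((matR A)⁻¹ ^ (i + 1)).mulVec ((c i : ℝ) • fun j => (v j : ℝ)))) x

/-- The self-affine tile `T = T(A, Dv)` with the consecutive collinear digit set `Dv`. -/
def Tile (A : Matrix (Fin 2) (Fin 2) ℤ) (q : ℤ) (v : Fin 2 → ℤ) : Set E2 :=
  {x | ∃ a : ℕ → ℤ, (∀ i, IsDigit q (a i)) ∧ SumsTo A v a x}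

/-- `T` is homeomorphic to the closed unit disk in `ℝ²`. -/
def DiskLike (T : Set E2) : Prop :=
  Nonempty (T ≃ₜ (Metric.closedBall (0 : E2) 1 : Set E2))

/-- `{v, Av}` is a `ℤ`-basis of `ℤ²` (primitivity of the digit set). -/
def IsZBasis (A : Matrix (Fin 2) (Fin 2) ℤ) (v : Fin 2 → ℤ) : Prop :=
  Submodule.span ℤ ({v, A.mulVec v} : Set (Fin 2 → ℤ)) = ⊤ ∧
    LinearIndependent ℤ ![v, A.mulVec v]

/-- `j ∈ I_b`, where `I_b = {b, …, |q|-1}` if `b ≥ 0` and `I_b = {0, …, |q|-1+b}` if `b < 0`. -/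
def MemI (q b j : ℤ) : Prop :=
  (0 ≤ b ∧ b ≤ j ∧ j ≤ |q| - 1) ∨ (b < 0 ∧ 0 ≤ j ∧ j ≤ |q| - 1 + b)

/-!
Prepending a digit `a` to a digit expansion shows `A⁻¹(T + a v) ⊆ T` for every `a ∈ D`.
If `x ∈ T ∩ (T + ℓ')`, then `A⁻¹(x + j v) ∈ T` because `j` is a digit, and, since
`ℓ' = Aℓ - b₁ v`, `A⁻¹(x + j v) - ℓ = A⁻¹((x - ℓ') + (j - b₁) v) ∈ T` because `j - b₁` is a digit.
The condition `j ∈ I_{b₁}` says exactly that both `j` and `j - b₁` lie in `D`.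
-/

lemma toEuclideanCLM_inv_apply_toEuclideanCLM {𝕜 n : Type*} [RCLike 𝕜] [Fintype n] [DecidableEq n]
    {M : Matrix n n 𝕜} (hM : IsUnit M.det) (y : EuclideanSpace 𝕜 n) :
    toEuclideanCLM (𝕜 := 𝕜) M⁻¹ (toEuclideanCLM (𝕜 := 𝕜) M y) = y := by
  rw [← mul_apply_eq_comp, ← map_mul, nonsing_inv_mul _ hM, map_one, one_apply_eq_self]

lemma det_eq_of_charpoly_eq {A : Matrix (Fin 2) (Fin 2) ℤ} {p q : ℤ}
    (hchar : A.charpoly = X ^ 2 + C p * X + C q) : A.det = q := by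
  simp [det_eq_sign_charpoly_coeff, hchar]

lemma isUnit_det_matR {A : Matrix (Fin 2) (Fin 2) ℤ} {p q : ℤ}
    (hchar : A.charpoly = X ^ 2 + C p * X + C q) (hq : q ≠ 0) : IsUnit (matR A).det := by
  change IsUnit ((Int.castRingHom ℝ).mapMatrix A).det
  rw [← RingHom.map_det, det_eq_of_charpoly_eq hchar]
  exact isUnit_iff_ne_zero.mpr (Int.cast_ne_zero.mpr hq)

lemma vecE_mulVec (A : Matrix (Fin 2) (Fin 2) ℤ) (w : Fin 2 → ℤ) :
    vecE (A *ᵥ w) = toEuclideanCLM (𝕜 := ℝ) (matR A) (vecE w) := by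
  ext i
  exact RingHom.map_mulVec (Int.castRingHom ℝ) A w i

lemma vecE_sub_smul (w u : Fin 2 → ℤ) (b : ℤ) :
    vecE (w - b • u) = vecE w - (b : ℝ) • vecE u := by
  ext i
  simp [vecE, toE]

theorem MemI.isDigit {q b j : ℤ} (h : MemI q b j) : IsDigit q j := by
  unfold MemI IsDigit at *
  omega

theorem MemI.isDigit_sub {q b j : ℤ} (h : MemI q b j) : IsDigit q (j - b) := by
  unfold MemI IsDigit at *
  omega

theorem inv_mulVec_digit_add_mem_tile {A : Matrix (Fin 2) (Fin 2) ℤ} {q a : ℤ} {v : Fin 2 → ℤ}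
    (ha : IsDigit q a) {x : E2} (hx : x ∈ Tile A q v) :
    toE ((matR A)⁻¹ *ᵥ ((a : ℝ) • vecE v + x)) ∈ Tile A q v := by
  obtain ⟨c, hc, hsum⟩ := hx
  refine ⟨fun n => Nat.casesOn n a c, fun n => Nat.casesOn n ha hc, ?_⟩
  have hshift : HasSum
      (fun i : ℕ => toE ((matR A)⁻¹ ^ (i + 1 + 1) *ᵥ ((c i : ℝ) • fun j => (v j : ℝ))))
      (toE ((matR A)⁻¹ *ᵥ x)) := by
    refine ((toEuclideanCLM (𝕜 := ℝ) (matR A)⁻¹).hasSum hsum).congr_fun fun i => ?_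
    rw [pow_succ', ← mulVec_mulVec]
    rfl
  have h := (hasSum_nat_add_iff 1 (f := fun i : ℕ =>
    toE ((matR A)⁻¹ ^ (i + 1) *ᵥ (((Nat.casesOn i a c : ℤ) : ℝ) • fun j => (v j : ℝ))))).mp hshift
  unfold SumsTo
  convert h using 1
  rw [Finset.sum_range_one, pow_one, mulVec_add, add_comm]
  rfl

theorem piece_inclusion_general
    (A : Matrix (Fin 2) (Fin 2) ℤ) (p q : ℤ) (v : Fin 2 → ℤ)
    (hq : 2 ≤ |q|)
    (hchar : A.charpoly = X ^ 2 + C p * X + C q)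
    (ℓ ℓ' : Fin 2 → ℤ)
    (b₁ : ℤ)
    (hrel : ℓ' = A.mulVec ℓ - b₁ • v) :
    ∀ j : ℤ, MemI q b₁ j →
      (fun x : E2 => toE ((matR A)⁻¹.mulVec x)) ''
          (((j : ℝ) • vecE v) +ᵥ (Tile A q v ∩ (vecE ℓ' +ᵥ Tile A q v))) ⊆
        Tile A q v ∩ (vecE ℓ +ᵥ Tile A q v) := by
  intro j hj
  have hA : IsUnit (matR A).det := isUnit_det_matR hchar (abs_pos.mp (by omega))
  rintro _ ⟨_, ⟨w, ⟨hw, hw'⟩, rfl⟩, rfl⟩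
  rw [Set.mem_vadd_set_iff_neg_vadd_mem] at hw'
  refine ⟨inv_mulVec_digit_add_mem_tile hj.isDigit hw, Set.mem_vadd_set_iff_neg_vadd_mem.mpr ?_⟩
  convert inv_mulVec_digit_add_mem_tile hj.isDigit_sub hw' using 1
  have hshift : ((j - b₁ : ℤ) : ℝ) • vecE v + (-vecE ℓ' + w) =
      (j : ℝ) • vecE v + w - toEuclideanCLM (𝕜 := ℝ) (matR A) (vecE ℓ) := by
    rw [hrel, vecE_sub_smul, vecE_mulVec]
    push_cast
    module
  change -vecE ℓ + toEuclideanCLM (𝕜 := ℝ) (matR A)⁻¹ ((j : ℝ) • vecE v + w) =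
    toEuclideanCLM (𝕜 := ℝ) (matR A)⁻¹ (((j - b₁ : ℤ) : ℝ) • vecE v + (-vecE ℓ' + w))
  rw [hshift, map_sub, toEuclideanCLM_inv_apply_toEuclideanCLM hA]
  abel

/-- first half of Proposition 3.1. If `ℓ, ℓ'` are neighbor translates
with `ℓ' = Aℓ - b₁v`, `b₁ ∈ ΔD`, then `A⁻¹(T_{ℓ'} + jv) ⊆ T_ℓ` for all `j ∈ I_{b₁}`,
where `T_m = T ∩ (T + m)`. -/
theorem piece_inclusion
    (A : Matrix (Fin 2) (Fin 2) ℤ) (p q : ℤ) (v : Fin 2 → ℤ)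
    (hq : 2 ≤ |q|)
    (hchar : A.charpoly = X ^ 2 + C p * X + C q)
    (hexp : Expanding A)
    (hbasis : IsZBasis A v)
    (hdisk : DiskLike (Tile A q v))
    (ℓ ℓ' : Fin 2 → ℤ) (hℓ : ℓ ≠ 0) (hℓ' : ℓ' ≠ 0)
    (hnb : (Tile A q v ∩ (vecE ℓ +ᵥ Tile A q v)).Nonempty)
    (hnb' : (Tile A q v ∩ (vecE ℓ' +ᵥ Tile A q v)).Nonempty)
    (b₁ : ℤ) (hb₁ : IsDiffDigit q b₁)
    (hrel : ℓ' = A.mulVec ℓ - b₁ • v) :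
    ∀ j : ℤ, MemI q b₁ j →
      (fun x : E2 => toE ((matR A)⁻¹.mulVec x)) ''
          (((j : ℝ) • vecE v) +ᵥ (Tile A q v ∩ (vecE ℓ' +ᵥ Tile A q v))) ⊆
        Tile A q v ∩ (vecE ℓ +ᵥ Tile A q v) :=
  piece_inclusion_general A p q v hq hchar ℓ ℓ' b₁ hrel
end
end

section
/- Suppose p ≥ 2, q ≥ 2, 2p ≤ q + 2, and (p, q) ≠ (2, 2). Then the set of nonzero lattice points ℓ ∈ ℤ² with T ∩ (T + ℓ) ≠ ∅ is exactly the six-element set {v, −v, Av + (p−1)v, −(Av + (p−1)v), Av + pv, −(Av + pv)}. -/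
noncomputable section

open Matrix Topology Set Pointwise Polynomial

/-!
A lattice point `ℓ` satisfies `T ∩ (T + ℓ) ≠ ∅` iff `ℓ = ∑ A^{-i-1} cᵢ v` with digits `cᵢ` in
`ΔD = D - D`. Since `A` is expanding, Gelfand's formula makes `∑ ‖A^{-n}‖` finite, and such an
expansion exists iff the remainders `ℓ₀ = ℓ`, `ℓₖ₊₁ = A ℓₖ - cₖ v` stay in a finite set. Writing
`ℓₖ = αₖ v + γₖ Av` and using `A²v = -p Av - q v`, this says exactly that `γ` is admissible: a
bounded integer sequence with `q γₖ + p γₖ₊₁ + γₖ₊₂ = -cₖ ∈ ΔD`; and then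
`ℓ = (γ₁ + p γ₀) v + γ₀ Av`.

For `2 ≤ p < q` with `2p ≤ q + 2`, a maximum `|γₖ| = b ≥ 2` is incompatible with these
constraints, so `|γₖ| ≤ 1`, and the constraint at `0` rules out `γ₀ = γ₁ = ±1`. The six remaining
nonzero starting pairs `(γ₀, γ₁)` extend to admissible sequences and give the six neighbors.
-/

open Filter

attribute [local instance] Matrix.linftyOpNormedRing Matrix.linftyOpNormedAlgebra

theorem summable_norm_pow_of_spectrum_subset_ball {𝔸 : Type*} [NormedRing 𝔸]
    [NormedAlgebra ℂ 𝔸] [CompleteSpace 𝔸] (a : 𝔸) (h : ∀ z ∈ spectrum ℂ a, ‖z‖ < 1) :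
    Summable fun n => ‖a ^ n‖ := by
  have hρ : spectralRadius ℂ a < 1 := by
    rcases (spectrum ℂ a).eq_empty_or_nonempty with he | hne
    · simp [spectralRadius, he]
    · obtain ⟨z, hz, hzρ⟩ := spectrum.exists_nnnorm_eq_spectralRadius_of_nonempty hne
      rw [← hzρ]
      exact_mod_cast h z hz
  obtain ⟨r, hρr, hr1⟩ := ENNReal.lt_iff_exists_nnreal_btwn.mp hρ
  have hev : ∀ᶠ n : ℕ in atTop, ‖a ^ n‖ ≤ (r : ℝ) ^ n := by
    filter_upwards [(spectrum.pow_nnnorm_pow_one_div_tendsto_nhds_spectralRadius a).eventually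
      (gt_mem_nhds hρr), eventually_gt_atTop 0] with n hn hn0
    have := ENNReal.pow_lt_pow_left hn0.ne' hn
    rw [← ENNReal.rpow_natCast, ← ENNReal.rpow_mul, one_div_mul_cancel (by positivity),
      ENNReal.rpow_one] at this
    exact_mod_cast this.le
  exact (summable_geometric_of_lt_one r.2 (by exact_mod_cast hr1)).of_norm_bounded_eventually_nat
    (by simpa using hev)

theorem Matrix.linfty_opNorm_mapMatrix_ofReal {n : Type*} [Fintype n] [DecidableEq n]
    (M : Matrix n n ℝ) : ‖Complex.ofRealHom.mapMatrix M‖ = ‖M‖ := by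
  simp [Matrix.linfty_opNorm_def]

namespace Expanding

variable {A : Matrix (Fin 2) (Fin 2) ℤ}

theorem one_lt_norm_of_mem_spectrum (hA : Expanding A) {z : ℂ}
    (hz : z ∈ spectrum ℂ (Complex.ofRealHom.mapMatrix (matR A))) : 1 < ‖z‖ := by
  have hmap : Complex.ofRealHom.mapMatrix (matR A) = A.map (Int.castRingHom ℂ) := by
    ext; simp [matR]
  rw [hmap, Matrix.mem_spectrum_iff_isRoot_charpoly, Matrix.charpoly_map] at hz
  exact hA z hz

theorem isUnit_det (hA : Expanding A) : IsUnit (matR A).det := by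
  have h0 : (0 : ℂ) ∉ spectrum ℂ (Complex.ofRealHom.mapMatrix (matR A)) := fun h =>
    (hA.one_lt_norm_of_mem_spectrum h).not_ge (by simp)
  rw [spectrum.zero_notMem_iff, Matrix.isUnit_iff_isUnit_det, ← RingHom.map_det] at h0
  simpa using h0

theorem summable_norm_inv_pow (hA : Expanding A) : Summable fun n => ‖(matR A)⁻¹ ^ n‖ := by
  set M := matR A
  have hM : IsUnit M.det := hA.isUnit_det
  let u : (Matrix (Fin 2) (Fin 2) ℂ)ˣ :=
    ⟨Complex.ofRealHom.mapMatrix M, Complex.ofRealHom.mapMatrix M⁻¹,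
      by rw [← map_mul, M.mul_nonsing_inv hM, map_one],
      by rw [← map_mul, M.nonsing_inv_mul hM, map_one]⟩
  have hu : ∀ z ∈ spectrum ℂ (↑u⁻¹ : Matrix (Fin 2) (Fin 2) ℂ), ‖z‖ < 1 := by
    intro z hz
    rw [← spectrum.map_inv, Set.mem_inv] at hz
    have := hA.one_lt_norm_of_mem_spectrum hz
    rw [norm_inv] at this
    exact (one_lt_inv_iff₀.mp this).2
  have := summable_norm_pow_of_spectrum_subset_ball _ hu
  simpa only [u, Units.inv_mk, ← map_pow, Matrix.linfty_opNorm_mapMatrix_ofReal] using this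

end Expanding

section DigitSeries

variable {n : Type*} [Fintype n] [DecidableEq n] {B : Matrix n n ℝ} {c : ℕ → ℝ} {M : ℝ}

lemma norm_pow_mulVec_smul_le (B : Matrix n n ℝ) (k : ℕ) {a : ℝ} (ha : |a| ≤ M) (w : n → ℝ) :
    ‖B ^ k *ᵥ (a • w)‖ ≤ ‖B ^ k‖ * (M * ‖w‖) := by
  refine (Matrix.linfty_opNorm_mulVec _ _).trans (mul_le_mul_of_nonneg_left ?_ (norm_nonneg _))
  rw [norm_smul, Real.norm_eq_abs]
  exact mul_le_mul_of_nonneg_right ha (norm_nonneg _)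

lemma summable_norm_pow_succ_mulVec_smul (hB : Summable fun k => ‖B ^ k‖)
    (hc : ∀ i, |c i| ≤ M) (w : n → ℝ) :
    Summable fun i => ‖B ^ (i + 1) *ᵥ (c i • w)‖ :=
  .of_nonneg_of_le (fun _ => norm_nonneg _) (fun i => norm_pow_mulVec_smul_le B (i + 1) (hc i) w)
    (((summable_nat_add_iff 1).2 hB).mul_right _)

lemma norm_le_of_hasSum_pow_succ_mulVec_smul (hB : Summable fun k => ‖B ^ k‖)
    (hc : ∀ i, |c i| ≤ M) (w : n → ℝ) {x : n → ℝ}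
    (hx : HasSum (fun i => B ^ (i + 1) *ᵥ (c i • w)) x) :
    ‖x‖ ≤ (∑' i, ‖B ^ (i + 1)‖) * (M * ‖w‖) :=
  hx.norm_le_of_bounded (((summable_nat_add_iff 1).2 hB).hasSum.mul_right _)
    fun i => norm_pow_mulVec_smul_le B (i + 1) (hc i) w

lemma tendsto_pow_mulVec_of_norm_le (hB : Summable fun k => ‖B ^ k‖) {x : ℕ → n → ℝ} {K : ℝ}
    (hx : ∀ k, ‖x k‖ ≤ K) : Tendsto (fun k => B ^ k *ᵥ x k) atTop (𝓝 0) := by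
  refine squeeze_zero_norm (fun k => (Matrix.linfty_opNorm_mulVec _ _).trans
    (mul_le_mul_of_nonneg_left (hx k) (norm_nonneg _))) ?_
  simpa using hB.tendsto_atTop_zero.mul_const K

end DigitSeries

lemma finite_setOf_norm_le {ι : Type*} [Fintype ι] (K : ℝ) : {w : ι → ℤ | ‖w‖ ≤ K}.Finite := by
  simpa [Metric.closedBall] using (isCompact_closedBall (0 : ι → ℤ) K).finite_of_discrete

section Expansions

variable {A : Matrix (Fin 2) (Fin 2) ℤ} {q : ℤ} {v : Fin 2 → ℤ}

lemma IsDigit.abs_le_abs {q a : ℤ} (h : IsDigit q a) : |a| ≤ |q| :=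
  abs_le.2 ⟨by linarith [h.1, abs_nonneg q], h.2.le⟩

lemma IsDigit.isDiffDigit_sub {q a b : ℤ} (ha : IsDigit q a) (hb : IsDigit q b) :
    IsDiffDigit q (a - b) := by
  rw [IsDiffDigit, abs_le]
  obtain ⟨ha0, ha1⟩ := ha
  obtain ⟨hb0, hb1⟩ := hb
  omega

@[simp] lemma ofLp_vecE (w : Fin 2 → ℤ) : (vecE w).ofLp = fun i => (w i : ℝ) := rfl

lemma matR_mulVec (A : Matrix (Fin 2) (Fin 2) ℤ) (w : Fin 2 → ℤ) :
    matR A *ᵥ (fun i => (w i : ℝ)) = fun i => ((A *ᵥ w) i : ℝ) := by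
  ext i; simp [matR, Matrix.mulVec, dotProduct]

lemma sumsTo_iff_hasSum {c : ℕ → ℤ} {x : E2} :
    SumsTo A v c x ↔
      HasSum (fun i => (matR A)⁻¹ ^ (i + 1) *ᵥ ((c i : ℝ) • fun j => (v j : ℝ))) x.ofLp :=
  (PiLp.continuousLinearEquiv 2 ℝ fun _ : Fin 2 => ℝ).symm.hasSum

lemma SumsTo.sub {a b : ℕ → ℤ} {x y : E2} (ha : SumsTo A v a x) (hb : SumsTo A v b y) :
    SumsTo A v (a - b) (x - y) := by
  rw [sumsTo_iff_hasSum] at *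
  simpa [sub_smul, Matrix.mulVec_sub] using ha.sub hb

lemma Expanding.exists_sumsTo (hA : Expanding A) {c : ℕ → ℤ} {M : ℤ} (hc : ∀ i, |c i| ≤ M) :
    ∃ x, SumsTo A v c x := by
  have hc' : ∀ i, |(c i : ℝ)| ≤ M := fun i => by exact_mod_cast hc i
  obtain ⟨y, hy⟩ := (summable_norm_pow_succ_mulVec_smul hA.summable_norm_inv_pow hc' _).of_norm
  exact ⟨toE y, sumsTo_iff_hasSum.2 hy⟩

lemma Expanding.exists_norm_le_of_sumsTo (hA : Expanding A) (M : ℤ) :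
    ∃ K, ∀ c x, (∀ i, |c i| ≤ M) → SumsTo A v c x → ‖x.ofLp‖ ≤ K :=
  ⟨_, fun c x hc hx => norm_le_of_hasSum_pow_succ_mulVec_smul hA.summable_norm_inv_pow
    (c := fun i => (c i : ℝ)) (M := M) (fun i => by exact_mod_cast hc i) _
    (sumsTo_iff_hasSum.1 hx)⟩

theorem Expanding.tile_inter_vadd_nonempty_iff_sumsTo (hA : Expanding A) (ℓ : Fin 2 → ℤ) :
    (Tile A q v ∩ (vecE ℓ +ᵥ Tile A q v)).Nonempty ↔
      ∃ c : ℕ → ℤ, (∀ i, IsDiffDigit q (c i)) ∧ SumsTo A v c (vecE ℓ) := by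
  constructor
  · rintro ⟨_, ⟨a, ha, hx⟩, y, ⟨b, hb, hy⟩, rfl⟩
    exact ⟨a - b, fun i => (ha i).isDiffDigit_sub (hb i), by simpa using hx.sub hy⟩
  · rintro ⟨c, hc, hℓ⟩
    have hdigit i : IsDigit q (max (c i) 0) ∧ IsDigit q (max (-c i) 0) := by
      have := hc i
      simp only [IsDigit, IsDiffDigit, abs_le] at this ⊢
      omega
    obtain ⟨x, hx⟩ := hA.exists_sumsTo (v := v) fun i => (hdigit i).1.abs_le_abs
    obtain ⟨y, hy⟩ := hA.exists_sumsTo (v := v) fun i => (hdigit i).2.abs_le_abs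
    have hsub : (fun i => max (c i) 0) - (fun i => max (-c i) 0) = c := by
      ext i
      simp only [Pi.sub_apply]
      omega
    have hxy : x - y = vecE ℓ := HasSum.unique (hsub ▸ hx.sub hy) hℓ
    refine ⟨x, ⟨_, fun i => (hdigit i).1, hx⟩, y, ⟨_, fun i => (hdigit i).2, hy⟩, ?_⟩
    change vecE ℓ + y = x
    rw [← hxy, sub_add_cancel]

def remainder (A : Matrix (Fin 2) (Fin 2) ℤ) (v ℓ : Fin 2 → ℤ) (c : ℕ → ℤ) : ℕ → Fin 2 → ℤ
  | 0 => ℓ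
  | k + 1 => A *ᵥ remainder A v ℓ c k - c k • v

lemma SumsTo.shift (hdet : IsUnit (matR A).det) {c : ℕ → ℤ} {w : Fin 2 → ℤ}
    (h : SumsTo A v c (vecE w)) : SumsTo A v (fun i => c (i + 1)) (vecE (A *ᵥ w - c 0 • v)) := by
  rw [sumsTo_iff_hasSum] at *
  have := h.map (Matrix.mulVecLin (matR A))
    (Continuous.matrix_mulVec continuous_const continuous_id)
  simp only [Function.comp_def, Matrix.mulVecLin_apply, Matrix.mulVec_mulVec, pow_succ',
    ← mul_assoc, Matrix.mul_nonsing_inv _ hdet, one_mul, ofLp_vecE, matR_mulVec] at this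
  rw [← hasSum_nat_add_iff' 1, Finset.sum_range_one, pow_zero, Matrix.one_mulVec] at this
  have hval : (vecE (A *ᵥ w - c 0 • v)).ofLp =
      (fun i => ((A *ᵥ w) i : ℝ)) - (c 0 : ℝ) • fun j => (v j : ℝ) := by
    ext j
    simp only [ofLp_vecE, Pi.sub_apply, Pi.smul_apply, smul_eq_mul]
    push_cast
    ring
  rwa [hval]

lemma sumsTo_remainder (hdet : IsUnit (matR A).det) {c : ℕ → ℤ} {ℓ : Fin 2 → ℤ}
    (h : SumsTo A v c (vecE ℓ)) (k : ℕ) :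
    SumsTo A v (fun i => c (k + i)) (vecE (remainder A v ℓ c k)) := by
  induction k with
  | zero => simpa [remainder] using h
  | succ k ih =>
    convert ih.shift hdet using 2
    · rw [add_right_comm, add_assoc]
    · simp [remainder]

lemma ofLp_vecE_eq_sum_add_remainder (hdet : IsUnit (matR A).det) (ℓ : Fin 2 → ℤ) (c : ℕ → ℤ)
    (k : ℕ) :
    (vecE ℓ).ofLp = ∑ i ∈ Finset.range k, (matR A)⁻¹ ^ (i + 1) *ᵥ ((c i : ℝ) • fun j => (v j : ℝ))
      + (matR A)⁻¹ ^ k *ᵥ (vecE (remainder A v ℓ c k)).ofLp := by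
  induction k with
  | zero => simp [remainder]
  | succ k ih =>
    have hstep : (vecE (remainder A v ℓ c (k + 1))).ofLp =
        matR A *ᵥ (vecE (remainder A v ℓ c k)).ofLp - (c k : ℝ) • fun j => (v j : ℝ) := by
      ext j
      simp only [remainder, ofLp_vecE, matR_mulVec, Pi.sub_apply, Pi.smul_apply, smul_eq_mul]
      push_cast
      ring
    rw [Finset.sum_range_succ, add_assoc, ← Matrix.mulVec_add, hstep, add_sub_cancel, pow_succ,
      ← Matrix.mulVec_mulVec, Matrix.mulVec_mulVec _ (matR A)⁻¹, Matrix.nonsing_inv_mul _ hdet,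
      Matrix.one_mulVec, ih]

theorem Expanding.sumsTo_vecE_iff (hA : Expanding A) {c : ℕ → ℤ} {M : ℤ} (hc : ∀ i, |c i| ≤ M)
    (ℓ : Fin 2 → ℤ) : SumsTo A v c (vecE ℓ) ↔ (Set.range (remainder A v ℓ c)).Finite := by
  constructor
  · intro h
    obtain ⟨K, hK⟩ := hA.exists_norm_le_of_sumsTo (v := v) M
    refine (finite_setOf_norm_le K).subset ?_
    rintro _ ⟨k, rfl⟩
    exact hK _ _ (fun i => hc _) (sumsTo_remainder hA.isUnit_det h k)
  · intro hfin
    obtain ⟨K, hK⟩ := (hfin.image norm).bddAbove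
    have hc' : ∀ i, |(c i : ℝ)| ≤ M := fun i => by exact_mod_cast hc i
    rw [sumsTo_iff_hasSum, hasSum_iff_tendsto_nat_of_summable_norm
      (summable_norm_pow_succ_mulVec_smul hA.summable_norm_inv_pow hc' _)]
    have htail := tendsto_pow_mulVec_of_norm_le hA.summable_norm_inv_pow
      (x := fun k => (vecE (remainder A v ℓ c k)).ofLp) (K := K)
      (fun k => hK ⟨_, ⟨k, rfl⟩, rfl⟩)
    have := (tendsto_const_nhds (x := (vecE ℓ).ofLp)).sub htail
    rw [sub_zero] at this
    refine this.congr fun k => ?_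
    rw [sub_eq_iff_eq_add, ← ofLp_vecE_eq_sum_add_remainder hA.isUnit_det ℓ c]

end Expansions

section Coordinates

variable {A : Matrix (Fin 2) (Fin 2) ℤ} {p q : ℤ} {v : Fin 2 → ℤ}

lemma mulVec_mulVec_of_charpoly (hchar : A.charpoly = X ^ 2 + C p * X + C q) (w : Fin 2 → ℤ) :
    A *ᵥ (A *ᵥ w) = -(p • A *ᵥ w) - q • w := by
  have h := congrArg (· *ᵥ w) (Matrix.aeval_self_charpoly A)
  simp only [hchar, map_add, map_mul, aeval_X, aeval_C, Algebra.algebraMap_eq_smul_one,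
    Matrix.add_mulVec, Matrix.smul_mulVec, Matrix.one_mulVec, Matrix.zero_mulVec, pow_two,
    ← Matrix.mulVec_mulVec] at h
  linear_combination (norm := module) h

lemma IsZBasis.exists_coords (h : IsZBasis A v) (w : Fin 2 → ℤ) :
    ∃ a b : ℤ, a • v + b • (A *ᵥ v) = w :=
  Submodule.mem_span_pair.mp (h.1 ▸ Submodule.mem_top)

lemma IsZBasis.coords_inj (h : IsZBasis A v) {a b a' b' : ℤ}
    (he : a • v + b • (A *ᵥ v) = a' • v + b' • (A *ᵥ v)) : a = a' ∧ b = b' := by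
  have := LinearIndependent.pair_iff.mp h.2 (a - a') (b - b') (by
    rw [sub_smul, sub_smul, sub_add_sub_comm, he, sub_self])
  omega

lemma IsZBasis.coords_mulVec_sub_smul (h : IsZBasis A v)
    (hchar : A.charpoly = X ^ 2 + C p * X + C q) {α β : (Fin 2 → ℤ) → ℤ}
    (hw : ∀ w, α w • v + β w • (A *ᵥ v) = w) (w : Fin 2 → ℤ) (d : ℤ) :
    α (A *ᵥ w - d • v) = -(q * β w) - d ∧ β (A *ᵥ w - d • v) = α w - p * β w := by
  refine h.coords_inj ?_
  rw [hw]
  conv_lhs => rw [← hw w]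
  rw [Matrix.mulVec_add, Matrix.mulVec_smul, Matrix.mulVec_smul, mulVec_mulVec_of_charpoly hchar]
  module

lemma remainder_eq_of_coords (hchar : A.charpoly = X ^ 2 + C p * X + C q) (γ : ℕ → ℤ) (k : ℕ) :
    remainder A v ((γ 1 + p * γ 0) • v + γ 0 • (A *ᵥ v))
        (fun k => -(q * γ k + p * γ (k + 1) + γ (k + 2))) k =
      (γ (k + 1) + p * γ k) • v + γ k • (A *ᵥ v) := by
  induction k with
  | zero => rfl
  | succ k ih =>
    rw [remainder, ih, Matrix.mulVec_add, Matrix.mulVec_smul, Matrix.mulVec_smul,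
      mulVec_mulVec_of_charpoly hchar]
    module

end Coordinates

def Admissible (p q : ℤ) (γ : ℕ → ℤ) : Prop :=
  (Set.range γ).Finite ∧ ∀ k, IsDiffDigit q (q * γ k + p * γ (k + 1) + γ (k + 2))

lemma isDiffDigit_neg {q a : ℤ} : IsDiffDigit q (-a) ↔ IsDiffDigit q a := by
  simp [IsDiffDigit]

section Neighbors

variable {A : Matrix (Fin 2) (Fin 2) ℤ} {p q : ℤ} {v : Fin 2 → ℤ}

theorem tile_inter_vadd_nonempty_iff_admissible (hchar : A.charpoly = X ^ 2 + C p * X + C q)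
    (hA : Expanding A) (hbasis : IsZBasis A v) (ℓ : Fin 2 → ℤ) :
    (Tile A q v ∩ (vecE ℓ +ᵥ Tile A q v)).Nonempty ↔
      ∃ γ, Admissible p q γ ∧ ℓ = (γ 1 + p * γ 0) • v + γ 0 • (A *ᵥ v) := by
  rw [hA.tile_inter_vadd_nonempty_iff_sumsTo]
  constructor
  · rintro ⟨c, hc, hℓ⟩
    have hfin := (hA.sumsTo_vecE_iff (fun i => hc i) ℓ).1 hℓ
    set r := remainder A v ℓ c
    choose α β hw using hbasis.exists_coords
    have hcoord k := hbasis.coords_mulVec_sub_smul hchar hw (r k) (c k)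
    have hα k : α (r k) = β (r (k + 1)) + p * β (r k) := by
      rw [show r (k + 1) = A *ᵥ r k - c k • v from rfl, (hcoord k).2]
      ring
    refine ⟨β ∘ r, ⟨Set.range_comp β r ▸ hfin.image β, fun k => ?_⟩, ?_⟩
    · have := (hcoord k).1
      rw [← isDiffDigit_neg]
      convert hc k using 1
      simp only [Function.comp_apply]
      rw [← show r (k + 1) = A *ᵥ r k - c k • v from rfl, hα] at this
      linarith
    · change ℓ = (β (r (0 + 1)) + p * β (r 0)) • v + β (r 0) • (A *ᵥ v)
      rw [← hα 0]
      exact (hw ℓ).symm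
  · rintro ⟨γ, ⟨hfin, hγ⟩, rfl⟩
    refine ⟨_, fun k => isDiffDigit_neg.2 (hγ k), (hA.sumsTo_vecE_iff (M := |q| - 1)
      (fun k => isDiffDigit_neg.2 (hγ k)) _).2 ?_⟩
    rw [funext (remainder_eq_of_coords hchar γ)]
    refine (hfin.image2 (fun a b => (b + p * a) • v + a • (A *ᵥ v)) hfin).subset ?_
    rintro _ ⟨k, rfl⟩
    exact ⟨γ k, ⟨k, rfl⟩, γ (k + 1), ⟨k + 1, rfl⟩, rfl⟩

theorem neighbors_eq_image (hchar : A.charpoly = X ^ 2 + C p * X + C q) (hA : Expanding A)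
    (hbasis : IsZBasis A v) :
    {ℓ : Fin 2 → ℤ | ℓ ≠ 0 ∧ (Tile A q v ∩ (vecE ℓ +ᵥ Tile A q v)).Nonempty} =
      (fun s : ℤ × ℤ => (s.2 + p * s.1) • v + s.1 • (A *ᵥ v)) ''
        {s | s ≠ 0 ∧ ∃ γ, Admissible p q γ ∧ γ 0 = s.1 ∧ γ 1 = s.2} := by
  have hzero {a b : ℤ} (h : (b + p * a) • v + a • (A *ᵥ v) = 0) : a = 0 ∧ b = 0 := by
    obtain ⟨hb, rfl⟩ := hbasis.coords_inj (a' := 0) (b' := 0)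
      (by rw [h, zero_smul, zero_smul, add_zero])
    simpa using hb
  ext ℓ
  simp only [Set.mem_ofPred_eq, Set.mem_image,
    tile_inter_vadd_nonempty_iff_admissible hchar hA hbasis]
  constructor
  · rintro ⟨hℓ, γ, hγ, rfl⟩
    refine ⟨(γ 0, γ 1), ⟨fun h => hℓ ?_, γ, hγ, rfl, rfl⟩, rfl⟩
    rw [Prod.mk_eq_zero] at h
    simp [h.1, h.2]
  · rintro ⟨⟨a, b⟩, ⟨hs, γ, hγ, rfl, rfl⟩, rfl⟩
    exact ⟨fun h => hs (Prod.mk_eq_zero.2 (hzero h)), γ, hγ, rfl⟩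

end Neighbors

section Admissible

variable {p q : ℤ} {γ : ℕ → ℤ}

lemma Admissible.neg (h : Admissible p q γ) : Admissible p q fun k => -γ k := by
  refine ⟨?_, fun k => ?_⟩
  · refine (h.1.image Neg.neg).subset ?_
    rintro _ ⟨k, rfl⟩
    exact ⟨γ k, ⟨k, rfl⟩, rfl⟩
  · rw [← isDiffDigit_neg]
    convert h.2 k using 1
    dsimp only
    ring

lemma lt_two_of_eq_max (hp : 2 ≤ p) (hpq : p < q) (hpq' : 2 * p ≤ q + 2) {b : ℤ}
    (hbd : ∀ k, |γ k| ≤ b) (h0 : γ 0 = b)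
    (hγ : ∀ k, |q * γ k + p * γ (k + 1) + γ (k + 2)| ≤ q - 1) : b < 2 := by
  by_contra! hb
  have hc0 := abs_le.mp (hγ 0)
  have hc1 := abs_le.mp (hγ 1)
  have hc2 := abs_le.mp (hγ 2)
  have hb1 := abs_le.mp (hbd 1)
  have hb2 := abs_le.mp (hbd 2)
  have hb3 := abs_le.mp (hbd 3)
  have hb4 := abs_le.mp (hbd 4)
  have hb5 := abs_le.mp (hbd 5)
  simp only [h0, Nat.reduceAdd] at hc0 hc1 hc2
  have hkey : p * γ 1 ≤ (q - 1) * (1 - b) := by nlinarith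
  -- For `q ≥ p + 2` the sequence is forced to alternate `b, -b, b`, which breaks the constraint
  -- at `0`; otherwise `(p, q)` is `(2, 3)` or `(3, 4)` and the first constraints are inconsistent.
  rcases (show p + 1 ≤ q by omega).lt_or_eq with hq | hq
  · have hg1 : γ 1 = -b := by
      have : p * γ 1 < p * (1 - b) := by nlinarith
      have := lt_of_mul_lt_mul_left this (by omega)
      omega
    have hg2 : γ 2 = b := by
      rw [hg1] at hc1
      have : p * (b - 1) < p * γ 2 := by nlinarith
      have := lt_of_mul_lt_mul_left this (by omega)
      omega
    rw [hg1, hg2] at hc0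
    nlinarith
  · obtain ⟨rfl, rfl⟩ | ⟨rfl, rfl⟩ : (p = 2 ∧ q = 3) ∨ (p = 3 ∧ q = 4) := by omega
    all_goals omega

lemma Admissible.abs_le_one (hp : 2 ≤ p) (hpq : p < q) (hpq' : 2 * p ≤ q + 2)
    (h : Admissible p q γ) (k : ℕ) : |γ k| ≤ 1 := by
  obtain ⟨_, ⟨m, rfl⟩, hm⟩ := Set.exists_max_image _ abs h.1 ⟨γ 0, 0, rfl⟩
  have hγ (k : ℕ) : |q * γ k + p * γ (k + 1) + γ (k + 2)| ≤ q - 1 := by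
    simpa [IsDiffDigit, abs_of_pos (by omega : 0 < q)] using h.2 k
  suffices |γ m| < 2 from (hm _ ⟨k, rfl⟩).trans (by omega)
  rcases abs_choice (γ m) with hm' | hm'
  · exact lt_two_of_eq_max hp hpq hpq' (γ := fun j => γ (m + j)) (fun j => hm _ ⟨_, rfl⟩)
      (by simp [hm']) (fun j => hγ (m + j))
  · refine lt_two_of_eq_max hp hpq hpq' (γ := fun j => -γ (m + j))
      (fun j => by rw [abs_neg]; exact hm _ ⟨_, rfl⟩) (by simp [hm']) (fun j => ?_)
    rw [← abs_neg]
    convert hγ (m + j) using 2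
    simp only [← add_assoc]
    ring

lemma Admissible.abs_add_le_one (hp : 2 ≤ p) (hpq : p < q) (hpq' : 2 * p ≤ q + 2)
    (h : Admissible p q γ) : |γ 0 + γ 1| ≤ 1 := by
  have hb0 := abs_le.mp (h.abs_le_one hp hpq hpq' 0)
  have hb1 := abs_le.mp (h.abs_le_one hp hpq hpq' 1)
  have hb2 := abs_le.mp (h.abs_le_one hp hpq hpq' 2)
  have hc := h.2 0
  simp only [IsDiffDigit, abs_of_pos (by omega : 0 < q), abs_le, zero_add] at hc ⊢
  rcases (by omega : γ 0 = -1 ∨ γ 0 = 0 ∨ γ 0 = 1) with h0 | h0 | h0 <;>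
  rcases (by omega : γ 1 = -1 ∨ γ 1 = 0 ∨ γ 1 = 1) with h1 | h1 | h1 <;>
  simp only [h0, h1] at hc ⊢ <;> omega

lemma admissible_of_abs_le_one (hb : ∀ k, |γ k| ≤ 1)
    (h : ∀ k, IsDiffDigit q (q * γ k + p * γ (k + 1) + γ (k + 2))) : Admissible p q γ :=
  ⟨(Set.finite_Icc (-1) 1).subset (by rintro _ ⟨k, rfl⟩; exact abs_le.mp (hb k)), h⟩

lemma isDiffDigit_neg_one_pow (hp : 2 ≤ p) (hpq : p < q) (k : ℕ) :
    IsDiffDigit q (q * (-1) ^ k + p * (-1) ^ (k + 1) + (-1) ^ (k + 2)) := by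
  rw [IsDiffDigit, show q * (-1) ^ k + p * (-1) ^ (k + 1) + (-1) ^ (k + 2) =
    (-1) ^ k * (q - p + 1) by ring, abs_mul, abs_pow, abs_neg, abs_one, one_pow, one_mul,
    abs_of_pos (by omega : 0 < q - p + 1), abs_of_pos (by omega : 0 < q)]
  omega

lemma exists_admissible_zero_one (hp : 2 ≤ p) (hpq : p < q) :
    ∃ γ, Admissible p q γ ∧ γ 0 = 0 ∧ γ 1 = 1 := by
  refine ⟨fun | 0 => 0 | k + 1 => (-1) ^ k, admissible_of_abs_le_one ?_ ?_, rfl, rfl⟩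
  · rintro (_ | k) <;> simp
  · rintro (_ | k)
    · simp only [IsDiffDigit, abs_of_pos (by omega : 0 < q)]
      norm_num [abs_lt]
      omega
    · exact isDiffDigit_neg_one_pow hp hpq k

lemma exists_admissible_one_neg_one (hp : 2 ≤ p) (hpq : p < q) :
    ∃ γ, Admissible p q γ ∧ γ 0 = 1 ∧ γ 1 = -1 :=
  ⟨_, admissible_of_abs_le_one (fun k => by simp) (isDiffDigit_neg_one_pow hp hpq), rfl, rfl⟩

lemma exists_admissible_one_zero (hp : 2 ≤ p) (hpq : p < q) :
    ∃ γ, Admissible p q γ ∧ γ 0 = 1 ∧ γ 1 = 0 := by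
  refine ⟨fun | 0 => 1 | 1 => 0 | k + 2 => -(-1) ^ k, admissible_of_abs_le_one ?_ ?_, rfl, rfl⟩
  · rintro (_ | _ | k) <;> simp
  · rintro (_ | _ | k)
    pick_goal 3
    · rw [← isDiffDigit_neg]
      convert isDiffDigit_neg_one_pow hp hpq k using 1
      ring
    all_goals
      simp only [IsDiffDigit, abs_of_pos (by omega : 0 < q)]
      norm_num [abs_lt]
      omega

theorem nonzero_admissible_starts_eq (hp : 2 ≤ p) (hpq : p < q) (hpq' : 2 * p ≤ q + 2) :
    {s : ℤ × ℤ | s ≠ 0 ∧ ∃ γ, Admissible p q γ ∧ γ 0 = s.1 ∧ γ 1 = s.2} =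
      {(0, 1), (0, -1), (1, -1), (-1, 1), (1, 0), (-1, 0)} := by
  ext ⟨a, b⟩
  simp only [Set.mem_ofPred_eq, Set.mem_insert_iff, Set.mem_singleton_iff, Prod.mk.injEq,
    ne_eq, Prod.mk_eq_zero]
  constructor
  · rintro ⟨hne, γ, hγ, rfl, rfl⟩
    have h0 := abs_le.mp (hγ.abs_le_one hp hpq hpq' 0)
    have h1 := abs_le.mp (hγ.abs_le_one hp hpq hpq' 1)
    have h01 := abs_le.mp (hγ.abs_add_le_one hp hpq hpq')
    omega
  · have hneg {a b : ℤ} : (∃ γ, Admissible p q γ ∧ γ 0 = a ∧ γ 1 = b) →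
        ∃ γ, Admissible p q γ ∧ γ 0 = -a ∧ γ 1 = -b := by
      rintro ⟨γ, hγ, rfl, rfl⟩
      exact ⟨_, hγ.neg, rfl, rfl⟩
    have h01 := exists_admissible_zero_one hp hpq
    have h1n := exists_admissible_one_neg_one hp hpq
    have h10 := exists_admissible_one_zero hp hpq
    rintro (⟨rfl, rfl⟩ | ⟨rfl, rfl⟩ | ⟨rfl, rfl⟩ | ⟨rfl, rfl⟩ | ⟨rfl, rfl⟩ | ⟨rfl, rfl⟩)
    exacts [⟨by simp, h01⟩, ⟨by simp, hneg h01⟩, ⟨by simp, h1n⟩,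
      ⟨by simp, by simpa using hneg h1n⟩, ⟨by simp, h10⟩, ⟨by simp, by simpa using hneg h10⟩]

end Admissible

theorem six_neighbors_general
    (A : Matrix (Fin 2) (Fin 2) ℤ) (p q : ℤ) (v : Fin 2 → ℤ)
    (hchar : A.charpoly = X ^ 2 + C p * X + C q)
    (hexp : Expanding A)
    (hbasis : IsZBasis A v)
    (hp2 : 2 ≤ p) (hpq : 2 * p ≤ q + 2) (hne : ¬(p = 2 ∧ q = 2)) :
    {ℓ : Fin 2 → ℤ | ℓ ≠ 0 ∧ (Tile A q v ∩ (vecE ℓ +ᵥ Tile A q v)).Nonempty} =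
      {v, -v, A.mulVec v + (p - 1) • v, -(A.mulVec v + (p - 1) • v),
        A.mulVec v + p • v, -(A.mulVec v + p • v)} := by
  rw [neighbors_eq_image hchar hexp hbasis, nonzero_admissible_starts_eq hp2 (by omega) hpq]
  simp only [Set.image_insert_eq, Set.image_singleton]
  iterate 5 (congr! 1; · module)
  congr! 1
  module

/-- If `p, q ≥ 2`, `2p ≤ q + 2` and `(p, q) ≠ (2, 2)`, then `T` has
exactly the six neighbor translates `±v`, `±(Av + (p-1)v)`, `±(Av + pv)`. -/
theorem six_neighbors
    (A : Matrix (Fin 2) (Fin 2) ℤ) (p q : ℤ) (v : Fin 2 → ℤ)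
    (hq : 2 ≤ |q|)
    (hchar : A.charpoly = X ^ 2 + C p * X + C q)
    (hexp : Expanding A)
    (hbasis : IsZBasis A v)
    (hp2 : 2 ≤ p) (hq2 : 2 ≤ q) (hpq : 2 * p ≤ q + 2) (hne : ¬(p = 2 ∧ q = 2)) :
    {ℓ : Fin 2 → ℤ | ℓ ≠ 0 ∧ (Tile A q v ∩ (vecE ℓ +ᵥ Tile A q v)).Nonempty} =
      {v, -v, A.mulVec v + (p - 1) • v, -(A.mulVec v + (p - 1) • v),
        A.mulVec v + p • v, -(A.mulVec v + p • v)} :=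
  six_neighbors_general A p q v hchar hexp hbasis hp2 hpq hne
end
end

section
/- Assume T + ℤ² = ℝ² and distinct translates T + m (m ∈ ℤ²) have pairwise disjoint interiors. Then A·(T°) ⊇ ⋃_{j=0}^{|q|−1} (T° + jv), and the sets T° + jv for j = 0, 1, …, |q|−1 are pairwise disjoint, where T° denotes the interior of T. -/
/-! Prepending a digit `j` to a digit expansion shows `T + jv ⊆ A·T`, which is the set equation
`A·T = T + Dv` read in one direction. As `A` is invertible it acts on the plane as a linear
homeomorphism, so interiors pass through: `T° + jv = (T + jv)° ⊆ (A·T)° = A·T°`. The translates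
`T° + jv` are interiors of the lattice translates `T + jv`, which are distinct because `v ≠ 0`. -/

noncomputable section

open Matrix Topology Set Pointwise Polynomial

theorem Matrix.det_fin_two_eq_of_charpoly_eq {R : Type*} [CommRing R] {A : Matrix (Fin 2) (Fin 2) R}
    {p q : R} (hchar : A.charpoly = X ^ 2 + C p * X + C q) : A.det = q := by
  simpa [hchar] using A.det_eq_sign_charpoly_coeff

theorem det_matR (A : Matrix (Fin 2) (Fin 2) ℤ) : (matR A).det = A.det :=
  (RingHom.map_det (Int.castRingHom ℝ) A).symm

theorem Matrix.image_interior_toEuclideanCLM {n : Type*} [Fintype n] [DecidableEq n]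
    {M : Matrix n n ℝ} (hM : IsUnit M) (s : Set (EuclideanSpace ℝ n)) :
    toEuclideanCLM (𝕜 := ℝ) M '' interior s = interior (toEuclideanCLM (𝕜 := ℝ) M '' s) := by
  obtain ⟨u, hu⟩ := hM.map (toEuclideanCLM (𝕜 := ℝ))
  rw [← hu]
  exact (ContinuousLinearEquiv.unitsEquiv ℝ _ u).toHomeomorph.image_interior s

theorem smul_vecE (k : ℤ) (w : Fin 2 → ℤ) : (k : ℝ) • vecE w = vecE (k • w) := by
  ext i
  simp [vecE, toE]

theorem sumsTo_iff {A : Matrix (Fin 2) (Fin 2) ℤ} {v : Fin 2 → ℤ} {c : ℕ → ℤ} {x : E2} :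
    SumsTo A v c x ↔
      HasSum (fun i => (toEuclideanCLM (𝕜 := ℝ) (matR A)⁻¹ ^ (i + 1)) ((c i : ℝ) • vecE v)) x := by
  simp only [← map_pow]
  rfl

theorem SumsTo.cons {A : Matrix (Fin 2) (Fin 2) ℤ} {v : Fin 2 → ℤ} {c : ℕ → ℤ} {x : E2}
    (h : SumsTo A v c x) (j : ℤ) :
    SumsTo A v (fun n => Nat.casesOn n j c)
      (toEuclideanCLM (𝕜 := ℝ) (matR A)⁻¹ ((j : ℝ) • vecE v + x)) := by
  rw [sumsTo_iff] at h ⊢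
  rw [map_add]
  refine HasSum.zero_add ?_
  convert (toEuclideanCLM (𝕜 := ℝ) (matR A)⁻¹).hasSum h using 2 with n
  rw [pow_succ']
  rfl

theorem vadd_tile_subset_image {A : Matrix (Fin 2) (Fin 2) ℤ} {q j : ℤ} (v : Fin 2 → ℤ)
    (hA : IsUnit (matR A)) (hj : IsDigit q j) :
    ((j : ℝ) • vecE v) +ᵥ Tile A q v ⊆ toEuclideanCLM (𝕜 := ℝ) (matR A) '' Tile A q v := by
  rintro _ ⟨x, ⟨a, ha, hx⟩, rfl⟩
  refine ⟨_, ⟨_, fun n => ?_, hx.cons j⟩, ?_⟩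
  · cases n
    exacts [hj, ha _]
  · rw [← mul_apply_eq_comp, ← map_mul,
      mul_nonsing_inv _ ((isUnit_iff_isUnit_det _).mp hA), map_one]
    rfl

theorem vadd_interior_tile_subset_image {A : Matrix (Fin 2) (Fin 2) ℤ} {q j : ℤ} (v : Fin 2 → ℤ)
    (hA : IsUnit (matR A)) (hj : IsDigit q j) :
    ((j : ℝ) • vecE v) +ᵥ interior (Tile A q v) ⊆
      toEuclideanCLM (𝕜 := ℝ) (matR A) '' interior (Tile A q v) :=
  calc ((j : ℝ) • vecE v) +ᵥ interior (Tile A q v)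
      = interior (((j : ℝ) • vecE v) +ᵥ Tile A q v) := (interior_vadd _ _).symm
    _ ⊆ interior (toEuclideanCLM (𝕜 := ℝ) (matR A) '' Tile A q v) :=
        interior_mono (vadd_tile_subset_image v hA hj)
    _ = toEuclideanCLM (𝕜 := ℝ) (matR A) '' interior (Tile A q v) :=
        (image_interior_toEuclideanCLM hA _).symm

theorem interior_subdivision_general
    (A : Matrix (Fin 2) (Fin 2) ℤ) (p q : ℤ) (v : Fin 2 → ℤ)
    (hq : 2 ≤ |q|)
    (hchar : A.charpoly = X ^ 2 + C p * X + C q)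
    (hbasis : IsZBasis A v)
    (hdisj : ∀ m m' : Fin 2 → ℤ, m ≠ m' →
      interior (vecE m +ᵥ Tile A q v) ∩ interior (vecE m' +ᵥ Tile A q v) = ∅) :
    (∀ j : ℤ, 0 ≤ j → j < |q| →
      ((j : ℝ) • vecE v) +ᵥ interior (Tile A q v) ⊆
        (fun x : E2 => toE ((matR A).mulVec x)) '' interior (Tile A q v)) ∧
    (∀ j j' : ℤ, 0 ≤ j → j < |q| → 0 ≤ j' → j' < |q| → j ≠ j' →
      (((j : ℝ) • vecE v) +ᵥ interior (Tile A q v)) ∩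
        (((j' : ℝ) • vecE v) +ᵥ interior (Tile A q v)) = ∅) := by
  have hA : IsUnit (matR A) := by
    have hq0 : (q : ℝ) ≠ 0 := by exact_mod_cast abs_pos.mp (by omega)
    rw [isUnit_iff_isUnit_det, det_matR, det_fin_two_eq_of_charpoly_eq hchar]
    exact hq0.isUnit
  have hv : v ≠ 0 := by simpa using hbasis.2.ne_zero 0
  refine ⟨fun j hj0 hj1 => vadd_interior_tile_subset_image v hA ⟨hj0, hj1⟩,
    fun j j' _ _ _ _ hjj' => ?_⟩
  rw [smul_vecE, smul_vecE, ← interior_vadd, ← interior_vadd]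
  exact hdisj _ _ fun h => hjj' (smul_left_injective ℤ hv h)

/-- equation (3.3). If `ℤ²` is a tiling set for `T`, then
`A·(T°) ⊇ ⋃_{j=0}^{|q|-1} (T° + jv)`, and the sets `T° + jv`, `0 ≤ j ≤ |q|-1`,
are pairwise disjoint. -/
theorem interior_subdivision
    (A : Matrix (Fin 2) (Fin 2) ℤ) (p q : ℤ) (v : Fin 2 → ℤ)
    (hq : 2 ≤ |q|)
    (hchar : A.charpoly = X ^ 2 + C p * X + C q)
    (hexp : Expanding A)
    (hbasis : IsZBasis A v)
    (hcover : (⋃ m : Fin 2 → ℤ, vecE m +ᵥ Tile A q v) = Set.univ)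
    (hdisj : ∀ m m' : Fin 2 → ℤ, m ≠ m' →
      interior (vecE m +ᵥ Tile A q v) ∩ interior (vecE m' +ᵥ Tile A q v) = ∅) :
    (∀ j : ℤ, 0 ≤ j → j < |q| →
      ((j : ℝ) • vecE v) +ᵥ interior (Tile A q v) ⊆
        (fun x : E2 => toE ((matR A).mulVec x)) '' interior (Tile A q v)) ∧
    (∀ j j' : ℤ, 0 ≤ j → j < |q| → 0 ≤ j' → j' < |q| → j ≠ j' →
      (((j : ℝ) • vecE v) +ᵥ interior (Tile A q v)) ∩
        (((j' : ℝ) • vecE v) +ᵥ interior (Tile A q v)) = ∅) :=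
  interior_subdivision_general A p q v hq hchar hbasis hdisj
end
end

section
/- Let A be a 2×2 expanding integer matrix that is a similarity (Aᵀ A = |q|·I₂) with characteristic polynomial f(x) = x² + px + q, |q| ≥ 2, and suppose 2|p| ≤ |q + 2|. Let v, v' ∈ ℤ² be such that {v, Av} is linearly independent and {v', Av'} is linearly independent, and let 𝒟 = Dv and 𝒟' = Dv' be the corresponding CC digit sets with D = {0, 1, …, |q|−1}. Then the boundaries of the two tiles have the same Hausdorff dimension: dim_H(∂T(A, 𝒟)) = dim_H(∂T(A, 𝒟')). -/
noncomputable section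

open Matrix Topology Set Pointwise Polynomial

/-!
The linear automorphism of `ℝ²` sending the basis `{v, Av}` to `{v', Av'}` commutes with `A`
(on `Av` this is Cayley–Hamilton, `A²v = (tr A) Av - (det A) v`), hence with `A⁻¹` and its
powers, so it carries the radix expansions defining `T(A, Dv)` term by term onto those of
`T(A, Dv')`. Being a linear homeomorphism, and bi-Lipschitz, it preserves boundaries and
Hausdorff dimension.
-/

theorem Matrix.mulVec_mulVec_fin_two {R : Type*} [CommRing R] (M : Matrix (Fin 2) (Fin 2) R)
    (u : Fin 2 → R) : M *ᵥ (M *ᵥ u) = M.trace • (M *ᵥ u) - M.det • u := by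
  ext i
  fin_cases i <;>
    simp [mulVec, dotProduct, trace, det_fin_two, Fin.sum_univ_two] <;> ring

section CommutingMaps

variable {n R : Type*} [Fintype n] [DecidableEq n] [CommRing R] {M : Matrix n n R}

theorem Matrix.map_inv_mulVec_of_map_mulVec {F : Type*} [FunLike F (n → R) (n → R)]
    [ZeroHomClass F (n → R) (n → R)] {f : F} (h : ∀ u, f (M *ᵥ u) = M *ᵥ f u) (u : n → R) :
    f (M⁻¹ *ᵥ u) = M⁻¹ *ᵥ f u := by
  by_cases hM : IsUnit M.det
  · calc f (M⁻¹ *ᵥ u) = M⁻¹ *ᵥ M *ᵥ f (M⁻¹ *ᵥ u) := by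
          rw [mulVec_mulVec, nonsing_inv_mul _ hM, one_mulVec]
      _ = M⁻¹ *ᵥ f u := by rw [← h, mulVec_mulVec, mul_nonsing_inv _ hM, one_mulVec]
  · simp [nonsing_inv_apply_not_isUnit _ hM]

theorem Matrix.map_pow_mulVec_of_map_mulVec {f : (n → R) → (n → R)} (h : ∀ u, f (M *ᵥ u) = M *ᵥ f u) (k : ℕ)
    (u : n → R) : f (M ^ k *ᵥ u) = M ^ k *ᵥ f u := by
  induction k generalizing u with
  | zero => simp
  | succ k ih => rw [pow_succ, ← mulVec_mulVec, ih, h, mulVec_mulVec]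

end CommutingMaps

theorem Matrix.exists_linearEquiv_commuting_of_cyclic_fin_two {K : Type*} [Field K]
    (M : Matrix (Fin 2) (Fin 2) K) {v w : Fin 2 → K} (hv : LinearIndependent K ![v, M *ᵥ v])
    (hw : LinearIndependent K ![w, M *ᵥ w]) :
    ∃ e : (Fin 2 → K) ≃ₗ[K] (Fin 2 → K), e v = w ∧ ∀ u, e (M *ᵥ u) = M *ᵥ e u := by
  have hcard : Fintype.card (Fin 2) = Module.finrank K (Fin 2 → K) := by simp
  let b := basisOfLinearIndependentOfCardEqFinrank hv hcard
  let b' := basisOfLinearIndependentOfCardEqFinrank hw hcard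
  have hb : ⇑b = ![v, M *ᵥ v] := coe_basisOfLinearIndependentOfCardEqFinrank hv hcard
  have hb' : ⇑b' = ![w, M *ᵥ w] := coe_basisOfLinearIndependentOfCardEqFinrank hw hcard
  let e := b.equiv b' (Equiv.refl _)
  have hev : e v = w := by simpa [hb, hb'] using b.equiv_apply 0 b' (Equiv.refl _)
  have heMv : e (M *ᵥ v) = M *ᵥ w := by simpa [hb, hb'] using b.equiv_apply 1 b' (Equiv.refl _)
  have hcomm_v : e (M *ᵥ v) = M *ᵥ e v := by rw [heMv, hev]
  have hcomm_Mv : e (M *ᵥ (M *ᵥ v)) = M *ᵥ e (M *ᵥ v) := by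
    rw [mulVec_mulVec_fin_two, map_sub, map_smul, map_smul, heMv, hev, mulVec_mulVec_fin_two]
  have hcomm : e.toLinearMap ∘ₗ M.toLin' = M.toLin' ∘ₗ e.toLinearMap :=
    b.ext <| Fin.forall_fin_two.2
      ⟨by simpa only [hb, LinearMap.comp_apply, toLin'_apply, LinearEquiv.coe_coe,
          cons_val_zero] using hcomm_v,
        by simpa only [hb, LinearMap.comp_apply, toLin'_apply, LinearEquiv.coe_coe,
          cons_val_one, cons_val_zero] using hcomm_Mv⟩
  exact ⟨e, hev, fun u => LinearMap.congr_fun hcomm u⟩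

theorem intCast_mulVec_eq_matR_mulVec (A : Matrix (Fin 2) (Fin 2) ℤ) (v : Fin 2 → ℤ) :
    (fun i => ((A *ᵥ v) i : ℝ)) = matR A *ᵥ fun i => (v i : ℝ) := by
  funext i
  simp [matR, Matrix.mulVec, dotProduct]

theorem sumsTo_withLpCongr_iff (A : Matrix (Fin 2) (Fin 2) ℤ) {v v' : Fin 2 → ℤ}
    (e : (Fin 2 → ℝ) ≃ₗ[ℝ] (Fin 2 → ℝ)) (hv : e (fun i => (v i : ℝ)) = fun i => (v' i : ℝ))
    (hcomm : ∀ u, e ((matR A)⁻¹ *ᵥ u) = (matR A)⁻¹ *ᵥ e u) (c : ℕ → ℤ) (x : E2) :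
    SumsTo A v' c ((e.withLpCongr 2).toContinuousLinearEquiv x) ↔ SumsTo A v c x := by
  have hterm : ∀ i : ℕ, (e.withLpCongr 2).toContinuousLinearEquiv
      (toE (((matR A)⁻¹ ^ (i + 1)) *ᵥ ((c i : ℝ) • fun j => (v j : ℝ)))) =
      toE (((matR A)⁻¹ ^ (i + 1)) *ᵥ ((c i : ℝ) • fun j => (v' j : ℝ))) := fun i => by
    change toE (e ((matR A)⁻¹ ^ (i + 1) *ᵥ ((c i : ℝ) • fun j => (v j : ℝ)))) = _
    rw [Matrix.map_pow_mulVec_of_map_mulVec hcomm, map_smul, hv]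
  simp only [SumsTo, ← hterm]
  exact (e.withLpCongr 2).toContinuousLinearEquiv.hasSum'

theorem tile_eq_image_withLpCongr (A : Matrix (Fin 2) (Fin 2) ℤ) (q : ℤ) {v v' : Fin 2 → ℤ}
    (e : (Fin 2 → ℝ) ≃ₗ[ℝ] (Fin 2 → ℝ)) (hv : e (fun i => (v i : ℝ)) = fun i => (v' i : ℝ))
    (hcomm : ∀ u, e (matR A *ᵥ u) = matR A *ᵥ e u) :
    Tile A q v' = (e.withLpCongr 2).toContinuousLinearEquiv '' Tile A q v := by
  ext x
  obtain ⟨y, rfl⟩ := (e.withLpCongr 2).toContinuousLinearEquiv.surjective x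
  rw [(e.withLpCongr 2).toContinuousLinearEquiv.injective.mem_set_image]
  exact exists_congr fun a => and_congr_right'
    (sumsTo_withLpCongr_iff A e hv (Matrix.map_inv_mulVec_of_map_mulVec hcomm) a y)

theorem dimH_frontier_independent_of_v_general
    (A : Matrix (Fin 2) (Fin 2) ℤ) (q : ℤ) (v v' : Fin 2 → ℤ)
    (hindep : LinearIndependent ℝ
      ![(fun i => (v i : ℝ)), (fun i => ((A.mulVec v) i : ℝ))])
    (hindep' : LinearIndependent ℝ
      ![(fun i => (v' i : ℝ)), (fun i => ((A.mulVec v') i : ℝ))]) :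
    dimH (frontier (Tile A q v)) = dimH (frontier (Tile A q v')) := by
  rw [intCast_mulVec_eq_matR_mulVec] at hindep hindep'
  obtain ⟨e, hev, hcomm⟩ := (matR A).exists_linearEquiv_commuting_of_cyclic_fin_two hindep hindep'
  let E := (e.withLpCongr 2).toContinuousLinearEquiv
  rw [tile_eq_image_withLpCongr A q e hev hcomm, ← E.coe_toHomeomorph,
    ← E.toHomeomorph.image_frontier]
  exact (E.dimH_image _).symm

/-- Corollary 3.8. For an expanding similarity `A` with
`2|p| ≤ |q+2|`, the Hausdorff dimension of `∂T(A, Dv)` does not depend on the choice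
of the vector `v` (among those with `{v, Av}` linearly independent). -/
theorem dimH_frontier_independent_of_v
    (A : Matrix (Fin 2) (Fin 2) ℤ) (p q : ℤ) (v v' : Fin 2 → ℤ)
    (hq : 2 ≤ |q|)
    (hchar : A.charpoly = X ^ 2 + C p * X + C q)
    (hexp : Expanding A)
    (hsim : Aᵀ * A = |q| • (1 : Matrix (Fin 2) (Fin 2) ℤ))
    (hpq : 2 * |p| ≤ |q + 2|)
    (hindep : LinearIndependent ℝ
      ![(fun i => (v i : ℝ)), (fun i => ((A.mulVec v) i : ℝ))])
    (hindep' : LinearIndependent ℝ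
      ![(fun i => (v' i : ℝ)), (fun i => ((A.mulVec v') i : ℝ))]) :
    dimH (frontier (Tile A q v)) = dimH (frontier (Tile A q v')) :=
  dimH_frontier_independent_of_v_general A q v v' hindep hindep'
end
end
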